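/- Under the transformation-model structure G(m|v) = G_η(M⁻¹(m,k,l,z) − h̄(x₋,z₋)), with the normalization M⁻¹(m₁*,k*,l*,z*) − M⁻¹(m₀*,k*,l*,z*) = 1, suppose there exists a point (x̃₋, z̃₋) and lagged variable q₋ such that ∂G/∂q₋ ≠ 0 everywhere on the relevant domain. Then ∂h̄(x̃₋,z̃₋)/∂q₋ = −S where S := (∫_{m₀*}^{m₁*} [∂G(m|k*,l*,z*,x̃₋,z̃₋)/∂m] / [∂G(m|k*,l*,z*,x̃₋,z̃₋)/∂q₋] dm)⁻¹, and consequently ∂M⁻¹(m,k,l,z)/∂q = S · [∂G(m|k,l,z,x̃₋,z̃₋)/∂q] / [∂G(m|k,l,z,x̃₋,z̃₋)/∂q₋] for all (m,k,l,z) and q ∈ {m,k,l,z}. -/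

import Mathlib

/-- Identification of ∂h̄/∂q₋ and the partial derivatives of the control
function M⁻¹ from the conditional distribution, under the normalization
M⁻¹(m₁*,k*,l*,z*) − M⁻¹(m₀*,k*,l*,z*) = 1. -/
theorem control_function_derivative_identification
    (Minv hbar : (Fin 4 → ℝ) → ℝ) (Gη : ℝ → ℝ)
    (hM : ContDiff ℝ 1 Minv) (hh : ContDiff ℝ 1 hbar) (hG : ContDiff ℝ 1 Gη)
    (hg : ∀ t, 0 < deriv Gη t)
    (hmono : ∀ (w : Fin 4 → ℝ) (m m' : ℝ), m < m' →
      Minv (Function.update w 0 m) < Minv (Function.update w 0 m'))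
    (m₀ m₁ : ℝ) (hm : m₀ < m₁) (wstar : Fin 4 → ℝ)
    (hnorm : Minv (Function.update wstar 0 m₁) - Minv (Function.update wstar 0 m₀) = 1)
    (utilde : Fin 4 → ℝ) (j : Fin 4)
    (hnz : ∀ w : Fin 4 → ℝ,
      fderiv ℝ (fun u => Gη (Minv w - hbar u)) utilde (Pi.single j 1) ≠ 0)
    (S : ℝ)
    (hS : S = (∫ m in m₀..m₁,
        (fderiv ℝ (fun w => Gη (Minv w - hbar utilde))
            (Function.update wstar 0 m) (Pi.single 0 1)) /
        (fderiv ℝ (fun u => Gη (Minv (Function.update wstar 0 m) - hbar u))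
            utilde (Pi.single j 1)))⁻¹) :
    fderiv ℝ hbar utilde (Pi.single j 1) = -S ∧
    ∀ (w : Fin 4 → ℝ) (i : Fin 4),
      fderiv ℝ Minv w (Pi.single i 1) =
        S * (fderiv ℝ (fun w' => Gη (Minv w' - hbar utilde)) w (Pi.single i 1)) /
            (fderiv ℝ (fun u => Gη (Minv w - hbar u)) utilde (Pi.single j 1)) := by

  have hhd : DifferentiableAt ℝ hbar utilde := (hh.differentiable one_ne_zero) utilde
  have hMd : ∀ w, DifferentiableAt ℝ Minv w := fun w => (hM.differentiable one_ne_zero) w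
  set c := fderiv ℝ hbar utilde (Pi.single j 1) with hc
  -- Lemma A: derivative in lagged variables
  have lemA : ∀ w : Fin 4 → ℝ,
      fderiv ℝ (fun u => Gη (Minv w - hbar u)) utilde (Pi.single j 1)
        = deriv Gη (Minv w - hbar utilde) * (-c) := by
    intro w
    have h1 : HasFDerivAt (fun u => Minv w - hbar u)
        (-(fderiv ℝ hbar utilde)) utilde := hhd.hasFDerivAt.const_sub (Minv w)
    have h2 : HasDerivAt Gη (deriv Gη (Minv w - hbar utilde)) (Minv w - hbar utilde) :=
      ((hG.differentiable one_ne_zero) _).hasDerivAt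
    have h3 : HasFDerivAt (fun u => Gη (Minv w - hbar u))
        (deriv Gη (Minv w - hbar utilde) • (-(fderiv ℝ hbar utilde))) utilde :=
      h2.comp_hasFDerivAt utilde h1
    rw [h3.fderiv]
    simp [hc, mul_comm]
  -- Lemma B: derivative in current variables
  have lemB : ∀ (w v : Fin 4 → ℝ),
      fderiv ℝ (fun w' => Gη (Minv w' - hbar utilde)) w v
        = deriv Gη (Minv w - hbar utilde) * fderiv ℝ Minv w v := by
    intro w v
    have h1 : HasFDerivAt (fun w' => Minv w' - hbar utilde)
        (fderiv ℝ Minv w) w := (hMd w).hasFDerivAt.sub_const (hbar utilde)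
    have h2 : HasDerivAt Gη (deriv Gη (Minv w - hbar utilde)) (Minv w - hbar utilde) :=
      ((hG.differentiable one_ne_zero) _).hasDerivAt
    have h3 : HasFDerivAt (fun w' => Gη (Minv w' - hbar utilde))
        (deriv Gη (Minv w - hbar utilde) • fderiv ℝ Minv w) w :=
      h2.comp_hasFDerivAt w h1
    rw [h3.fderiv]
    simp
  -- c ≠ 0
  have hc0 : c ≠ 0 := by
    intro h
    apply hnz utilde
    rw [lemA utilde, h]
    simp
  have hnc0 : (-c) ≠ 0 := neg_ne_zero.mpr hc0
  -- the curve m ↦ update wstar 0 m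
  have hupd : ∀ m : ℝ, HasDerivAt (fun m => Function.update wstar 0 m)
      (Pi.single 0 1 : Fin 4 → ℝ) m := by
    intro m
    have he : (fun m : ℝ => Function.update wstar 0 m)
        = fun m => wstar + (m - wstar 0) • (Pi.single 0 1 : Fin 4 → ℝ) := by
      funext m i
      by_cases hi : i = 0
      · subst hi; simp
      · simp [Function.update, hi, Pi.single_apply]
    rw [he]
    simpa using
      (((hasDerivAt_id m).sub_const (wstar 0)).smul_const
        (Pi.single 0 1 : Fin 4 → ℝ)).const_add wstar
  -- φ' m
  set A : ℝ → ℝ := fun m => fderiv ℝ Minv (Function.update wstar 0 m) (Pi.single 0 1) with hA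
  have hφ : ∀ m : ℝ, HasDerivAt (fun m => Minv (Function.update wstar 0 m)) (A m) m :=
    fun m => (hMd _).hasFDerivAt.comp_hasDerivAt m (hupd m)
  have hupdc : Continuous (fun m : ℝ => Function.update wstar 0 m) :=
    continuous_iff_continuousAt.mpr fun m => (hupd m).continuousAt
  have hAc : Continuous A := by
    have hfc : Continuous (fderiv ℝ Minv) := (contDiff_one_iff_fderiv.mp hM).2
    exact (hfc.comp hupdc).clm_apply continuous_const
  have key : (∫ m in m₀..m₁, A m)
      = Minv (Function.update wstar 0 m₁) - Minv (Function.update wstar 0 m₀) :=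
    intervalIntegral.integral_eq_sub_of_hasDerivAt (fun t _ => hφ t)
      (hAc.intervalIntegrable _ _)
  -- compute S
  have hSc : S = -c := by
    rw [hS,
      show (∫ m in m₀..m₁,
          (fderiv ℝ (fun w => Gη (Minv w - hbar utilde))
              (Function.update wstar 0 m) (Pi.single 0 1)) /
          (fderiv ℝ (fun u => Gη (Minv (Function.update wstar 0 m) - hbar u))
              utilde (Pi.single j 1)))
        = ∫ m in m₀..m₁, A m / (-c) from
        intervalIntegral.integral_congr fun m _ => by
          rw [lemB, lemA, mul_div_mul_left _ _ (ne_of_gt (hg _))],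
      intervalIntegral.integral_div, key, hnorm, one_div, inv_inv]
  constructor
  · rw [hSc, neg_neg]
  · intro w i
    rw [lemB, lemA, hSc, mul_div_assoc,
      mul_div_mul_left _ _ (ne_of_gt (hg _))]
    field_simp
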